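/- arXiv:1712.08747 — 2 statements merged into one kernel-verified Lean document; each statement's English description precedes it below -/
import Mathlib

section
/- Let λ, μ, ν, M, A > 0 and define g(u) = A · E[min{E_μ, E_ν · max{1, u/M}}] for u ≥ 0, where E_μ, E_ν are independent exponentials with rates μ, ν. Then the fixed-point equation u = g(u) has a unique nonnegative solution u*. -/
/-! Below `M` the map is the constant `A/(μ+ν)`, and above `M` the fixed-point equation
`u = A u / (u μ + ν M)` is linear, `u μ + ν M = A`. Which of the two candidates
`A/(μ+ν)` and `(A - ν M)/μ` lies in its own region is decided by the sign of `A - M (μ+ν)`,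
and exactly one of them does. -/

/-- The fluid fixed-point map: `g u = A · E[min{E_μ, E_ν · max{1, u/M}}]`,
written explicitly using the expectation of the minimum of independent
exponentials: `g u = A/(μ+ν)` if `u ≤ M` and `g u = A·(u/M)/((u/M)·μ + ν)` else. -/
noncomputable def fluidMap (A M μ ν : ℝ) (u : ℝ) : ℝ :=
  if u ≤ M then A / (μ + ν) else A * (u / M) / ((u / M) * μ + ν)

section

variable {A M μ ν u : ℝ}

theorem fluidMap_eq_self_iff_of_le (hu : u ≤ M) : fluidMap A M μ ν u = u ↔ u = A / (μ + ν) := by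
  rw [fluidMap, if_pos hu, eq_comm]

theorem fluidMap_eq_self_iff_of_lt (hμ : 0 < μ) (hν : 0 < ν) (hM : 0 < M) (hu : M < u) :
    fluidMap A M μ ν u = u ↔ u = (A - ν * M) / μ := by
  have hu₀ : 0 < u := hM.trans hu
  have hden : 0 < u / M * μ + ν := by positivity
  have hfactor : A * (u / M) - u * (u / M * μ + ν) = u / M * ((A - ν * M) - u * μ) := by
    field_simp
    ring
  rw [fluidMap, if_neg hu.not_ge, div_eq_iff hden.ne', eq_div_iff hμ.ne', ← sub_eq_zero,
    hfactor, mul_eq_zero, or_iff_right (div_pos hu₀ hM).ne', sub_eq_zero, eq_comm]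

theorem fluidMap_eq_self_iff_of_le_threshold (hμ : 0 < μ) (hν : 0 < ν) (hM : 0 < M)
    (hA : A ≤ M * (μ + ν)) (u : ℝ) : fluidMap A M μ ν u = u ↔ u = A / (μ + ν) := by
  rcases le_or_gt u M with hu | hu
  · exact fluidMap_eq_self_iff_of_le hu
  · have hlow : A / (μ + ν) ≤ M := (div_le_iff₀ (by positivity)).2 hA
    have hhigh : (A - ν * M) / μ ≤ M := (div_le_iff₀ hμ).2 (by linarith)
    rw [fluidMap_eq_self_iff_of_lt hμ hν hM hu]
    exact iff_of_false (by linarith) (by linarith)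

theorem fluidMap_eq_self_iff_of_threshold_lt (hμ : 0 < μ) (hν : 0 < ν) (hM : 0 < M)
    (hA : M * (μ + ν) < A) (u : ℝ) : fluidMap A M μ ν u = u ↔ u = (A - ν * M) / μ := by
  rcases le_or_gt u M with hu | hu
  · have hlow : M < A / (μ + ν) := (lt_div_iff₀ (by positivity)).2 hA
    have hhigh : M < (A - ν * M) / μ := (lt_div_iff₀ hμ).2 (by linarith)
    rw [fluidMap_eq_self_iff_of_le hu]
    exact iff_of_false (by linarith) (by linarith)
  · exact fluidMap_eq_self_iff_of_lt hμ hν hM hu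

end

theorem existsUnique_nonneg_of_forall_iff {f : ℝ → ℝ} {c : ℝ} (hc : 0 ≤ c)
    (h : ∀ u, f u = u ↔ u = c) : ∃! u : ℝ, 0 ≤ u ∧ f u = u :=
  ⟨c, ⟨hc, (h c).2 rfl⟩, fun u hu => (h u).1 hu.2⟩

theorem fluid_fixed_point_exists_unique_general (A M μ ν : ℝ)
    (hμ : 0 < μ) (hν : 0 < ν) (hM : 0 < M) (hA : 0 < A) :
    ∃! u : ℝ, 0 ≤ u ∧ fluidMap A M μ ν u = u := by
  rcases le_or_gt A (M * (μ + ν)) with hth | hth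
  · exact existsUnique_nonneg_of_forall_iff (by positivity)
      (fluidMap_eq_self_iff_of_le_threshold hμ hν hM hth)
  · have hpos : 0 < (A - ν * M) / μ := div_pos (by nlinarith) hμ
    exact existsUnique_nonneg_of_forall_iff hpos.le
      (fluidMap_eq_self_iff_of_threshold_lt hμ hν hM hth)

theorem fluid_fixed_point_exists_unique (lam A M μ ν : ℝ)
    (hlam : 0 < lam) (hμ : 0 < μ) (hν : 0 < ν) (hM : 0 < M) (hA : 0 < A) :
    ∃! u : ℝ, 0 ≤ u ∧ fluidMap A M μ ν u = u :=
  fluid_fixed_point_exists_unique_general A M μ ν hμ hν hM hA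
end

section
/- In the case K = M, the two-dimensional Markov chain (U, Q) on {(u,q) : 0 ≤ u ≤ q ≤ K} with transitions (u,q)→(u+1,q+1) at rate λ (if q < K), (u,q)→(u−1,q) at rate uν, (u,q)→(u−1,q−1) at rate uμ, and (u,q)→(u,q−1) at rate (q−u)μ, has stationary distribution π(u,q) proportional to (λ/(μ+ν))^u / u! · (λν/(μ(μ+ν)))^{q−u} / (q−u)! restricted to 0 ≤ u ≤ q ≤ K; verify that this measure satisfies the global balance equations. -/
/-- Candidate stationary measure for the `K = M` charging-station chain:
`π(u,q) ∝ (λ/(μ+ν))^u/u! · (λν/(μ(μ+ν)))^{q−u}/(q−u)!` on `0 ≤ u ≤ q ≤ K`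
and `0` outside this region. -/
noncomputable def statMeas (lam μ ν : ℝ) (K : ℕ) (u q : ℕ) : ℝ :=
  if u ≤ q ∧ q ≤ K then
    (lam / (μ + ν)) ^ u / (Nat.factorial u) *
      (lam * ν / (μ * (μ + ν))) ^ (q - u) / (Nat.factorial (q - u))
  else 0

/-!
In the coordinates `u` (uncharged) and `q - u` (charged) the measure is a product of two
Poisson weights `a^u/u!` and `b^(q-u)/(q-u)!`, with `a = λ/(μ+ν)` and `b = λν/(μ(μ+ν))`,
cut off at `q ≤ K`. Raising `u` or `q - u` by one multiplies the weight by `a/(u+1)` resp.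
`b/(q-u+1)`, so each inflow term of the balance equation is `π(u,q)` times an explicit rate.
The arrival inflow then equals the outflow `u(μ+ν)`, the charge-completion inflow equals the
outflow `(q-u)μ` (because `aν = bμ`), and the two departure inflows together give
`(a+b)μ = λ`, the arrival outflow, which is present exactly when `q < K`.
-/

section ProductFormWeight

variable {𝕜 : Type*} [Field 𝕜] (a b : 𝕜) (K : ℕ) {u q : ℕ}

noncomputable def productFormWeight (u q : ℕ) : 𝕜 :=
  if u ≤ q ∧ q ≤ K then
    a ^ u / (Nat.factorial u) * b ^ (q - u) / (Nat.factorial (q - u))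
  else 0

theorem productFormWeight_of_lt (h : K < q) : productFormWeight a b K u q = 0 := by
  simp [productFormWeight, h.not_ge]

variable [CharZero 𝕜]

theorem productFormWeight_succ_succ_mul (hq : q < K) :
    productFormWeight a b K (u + 1) (q + 1) * (u + 1) = a * productFormWeight a b K u q := by
  by_cases huq : u ≤ q
  · rw [productFormWeight, productFormWeight, if_pos ⟨by omega, hq⟩, if_pos ⟨huq, hq.le⟩]
    simp only [Nat.add_sub_add_right, Nat.factorial_succ, Nat.cast_mul, Nat.cast_succ, pow_succ]
    field_simp
  · simp [productFormWeight, huq]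

theorem productFormWeight_succ_right_mul (hq : q < K) :
    productFormWeight a b K u (q + 1) * ((q + 1 - u : ℕ) : 𝕜) =
      b * productFormWeight a b K u q := by
  by_cases huq : u ≤ q
  · have hsub : q + 1 - u = q - u + 1 := Nat.sub_add_comm huq
    rw [productFormWeight, productFormWeight, if_pos ⟨by omega, hq⟩, if_pos ⟨huq, hq.le⟩, hsub]
    have : ((q - u : ℕ) : 𝕜) + 1 ≠ 0 := Nat.cast_add_one_ne_zero _
    simp only [Nat.factorial_succ, Nat.cast_mul, Nat.cast_succ, pow_succ]
    field_simp
  · simp [productFormWeight, huq, Nat.sub_eq_zero_of_le (not_le.mp huq)]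

variable {a b}

theorem productFormWeight_pred_pred_mul {c lam : 𝕜} (hc : a * c = lam) (huq : u ≤ q)
    (hq : q ≤ K) :
    (if 1 ≤ u then productFormWeight a b K (u - 1) (q - 1) * lam else 0) =
      productFormWeight a b K u q * (u * c) := by
  rcases u with _ | u
  · simp
  obtain ⟨q, rfl⟩ : ∃ q', q = q' + 1 := ⟨q - 1, by omega⟩
  rw [if_pos le_add_self, Nat.add_sub_cancel, Nat.add_sub_cancel, ← hc, Nat.cast_succ]
  linear_combination -c * productFormWeight_succ_succ_mul a b K (u := u) hq

theorem productFormWeight_succ_left_mul {c d : 𝕜} (hcd : a * c = b * d) (hq : q ≤ K) :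
    productFormWeight a b K (u + 1) q * ((u + 1) * c) =
      productFormWeight a b K u q * ((q - u : ℕ) * d) := by
  rcases q with _ | q
  · simp [productFormWeight]
  calc productFormWeight a b K (u + 1) (q + 1) * ((u + 1) * c)
      = a * productFormWeight a b K u q * c := by
        rw [← productFormWeight_succ_succ_mul a b K hq, mul_assoc]
    _ = b * productFormWeight a b K u q * d := by rw [mul_right_comm, hcd]; ring
    _ = productFormWeight a b K u (q + 1) * ((q + 1 - u : ℕ) * d) := by
        rw [← productFormWeight_succ_right_mul a b K hq, mul_assoc]

end ProductFormWeight

theorem statMeas_eq_productFormWeight (lam μ ν : ℝ) (K : ℕ) :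
    statMeas lam μ ν K = productFormWeight (lam / (μ + ν)) (lam * ν / (μ * (μ + ν))) K :=
  rfl

theorem statMeas_global_balance_general (lam μ ν : ℝ) (K : ℕ)
    (hμ : 0 < μ) (hν : 0 < ν) :
    ∀ u q : ℕ, u ≤ q → q ≤ K →
      statMeas lam μ ν K u q *
          ((if q < K then lam else 0) + u * ν + u * μ + (q - u : ℕ) * μ)
        = (if 1 ≤ u then statMeas lam μ ν K (u - 1) (q - 1) * lam else 0)
          + statMeas lam μ ν K (u + 1) q * ((u + 1) * ν)
          + statMeas lam μ ν K (u + 1) (q + 1) * ((u + 1) * μ)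
          + statMeas lam μ ν K u (q + 1) * ((q + 1 - u : ℕ) * μ) := by
  intro u q huq hq
  set a := lam / (μ + ν)
  set b := lam * ν / (μ * (μ + ν))
  have hμν : μ + ν ≠ 0 := by positivity
  have h_arrival : a * (μ + ν) = lam := by simp only [a]; field_simp
  have h_charge : a * ν = b * μ := by simp only [a, b]; field_simp
  have h_departure : a * μ + b * μ = lam := by simp only [a, b]; field_simp
  rw [statMeas_eq_productFormWeight, productFormWeight_pred_pred_mul K h_arrival huq hq,
    productFormWeight_succ_left_mul K h_charge hq]
  rcases hq.lt_or_eq with hq | rfl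
  · rw [if_pos hq]
    linear_combination -μ * productFormWeight_succ_succ_mul a b K (u := u) hq
      - μ * productFormWeight_succ_right_mul a b K (u := u) hq
      - productFormWeight a b K u q * h_departure
  · rw [if_neg q.lt_irrefl, productFormWeight_of_lt a b q q.lt_succ_self,
      productFormWeight_of_lt a b q q.lt_succ_self]
    ring

/-- Global balance equations for the `K = M` chain: for each state `(u,q)` with
`u ≤ q ≤ K`, total outflow rate equals total inflow rate under `statMeas`.
Transitions: arrival `(u,q)→(u+1,q+1)` at rate `λ` if `q < K`; charge completion
`(u,q)→(u−1,q)` at rate `uν`; departure uncharged `(u,q)→(u−1,q−1)` at rate `uμ`;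
departure charged `(u,q)→(u,q−1)` at rate `(q−u)μ`. -/
theorem statMeas_global_balance (lam μ ν : ℝ) (K : ℕ)
    (hlam : 0 < lam) (hμ : 0 < μ) (hν : 0 < ν) :
    ∀ u q : ℕ, u ≤ q → q ≤ K →
      statMeas lam μ ν K u q *
          ((if q < K then lam else 0) + u * ν + u * μ + (q - u : ℕ) * μ)
        = (if 1 ≤ u then statMeas lam μ ν K (u - 1) (q - 1) * lam else 0)
          + statMeas lam μ ν K (u + 1) q * ((u + 1) * ν)
          + statMeas lam μ ν K (u + 1) (q + 1) * ((u + 1) * μ)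
          + statMeas lam μ ν K u (q + 1) * ((q + 1 - u : ℕ) * μ) :=
  statMeas_global_balance_general lam μ ν K hμ hν
end
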